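/- Let n ≥ 4 and 0 < ε < 1, and consider the star Minimum Multicut instance I(n,ε): vertices s₁,…,s_{n−1}, u; terminal pairs all {s_i, s_j} with i ≠ j; edges (u,s₁) of weight n−2−ε/2 and (u,s_i) of weight 1 for 2 ≤ i ≤ n−1. Then the minimum weight of a multicut equals n−2, while the edge-length assignment ℓ(u,s_i) = 1/2 for all i is a feasible solution of the metric LP relaxation (every path between two terminals has total length at least 1) whose objective value equals n−2−ε/4 < n−2. Hence the LP relaxation of Minimum Multicut is not integral on this (n−2−ε)-stable instance. -/

import Mathlib

open Finset

/-- The star graph of the Minimum Multicut instance `I(n, ε)`: vertices are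
`s₁, …, s_{n−1}` (the elements `some i`, where `s₁` corresponds to `i = 0`) together
with the center `u` (the element `none`); the edges are exactly the pairs `(u, s_i)`. -/
def starGraph (n : ℕ) : SimpleGraph (Option (Fin (n - 1))) :=
  SimpleGraph.fromRel (fun x y => x = none ∨ y = none)

/-- Edge weights of the instance `I(n, ε)`: the edge `(u, s₁)` has weight `n − 2 − ε/2`
and the edges `(u, s_i)`, `2 ≤ i ≤ n − 1`, have weight `1`; all other pairs get `0`. -/
noncomputable def starWeight (n : ℕ) (ε : ℝ) :
    Option (Fin (n - 1)) → Option (Fin (n - 1)) → ℝ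
  | none, some i => if (i : ℕ) = 0 then (n : ℝ) - 2 - ε / 2 else 1
  | some i, none => if (i : ℕ) = 0 then (n : ℝ) - 2 - ε / 2 else 1
  | _, _ => 0

/-- The total weight of a set `F` of (unordered) edges of the instance `I(n, ε)`
(the ordered double sum counts every pair twice). -/
noncomputable def starEdgesWeight (n : ℕ) (ε : ℝ)
    (F : Finset (Sym2 (Option (Fin (n - 1))))) : ℝ :=
  (∑ x, ∑ y, if s(x, y) ∈ F then starWeight n ε x y else 0) / 2

/-- `E'` is a multicut of the instance `I(n, ε)`: a set of edges of the star graph whose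
removal disconnects every pair of distinct terminals `s_i, s_j`. -/
def IsStarMulticut (n : ℕ) (E' : Finset (Sym2 (Option (Fin (n - 1))))) : Prop :=
  ↑E' ⊆ (starGraph n).edgeSet ∧
  ∀ i j : Fin (n - 1), i ≠ j →
    ¬ ((starGraph n).deleteEdges ↑E').Reachable (some i) (some j)

/-- The multicut `E* = {(u, s_i) : 2 ≤ i ≤ n − 1}`. -/
noncomputable def starEstar (n : ℕ) : Finset (Sym2 (Option (Fin (n - 1)))) :=
  have := Classical.propDecidable
  Finset.univ.filter (fun e => ∃ i : Fin (n - 1), (i : ℕ) ≠ 0 ∧ e = s(none, some i))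

/-!
A multicut must cut one of the spokes `(u, s_i)`, `(u, s_j)` for every `i ≠ j`, since together
they form a path `s_i – u – s_j`; so it keeps at most one spoke, and its weight is at least the
total spoke weight `2(n − 2) − ε/2` minus the heaviest spoke `n − 2 − ε/2`. Cutting all light
spokes attains `n − 2`. On the other hand, two terminals are never adjacent, so every path
between them uses at least two edges and `ℓ ≡ 1/2` is feasible; its objective is half the
total spoke weight, `n − 2 − ε/4`.
-/

theorem Fintype.sum_sum_option_eq_two_mul {V R : Type*} [Fintype V] [CommSemiring R]
    (f : Option V → Option V → R)
    (hnn : f none none = 0) (hss : ∀ i j, f (some i) (some j) = 0)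
    (hsymm : ∀ i, f (some i) none = f none (some i)) :
    ∑ x, ∑ y, f x y = 2 * ∑ i, f none (some i) := by
  simp only [Fintype.sum_option, hnn, hss, hsymm, Finset.sum_const_zero, zero_add, add_zero]
  ring

theorem SimpleGraph.Walk.two_le_length_of_not_adj {V : Type*} {G : SimpleGraph V} {u v : V}
    (p : G.Walk u v) (hne : u ≠ v) (hadj : ¬G.Adj u v) : 2 ≤ p.length := by
  have h0 : p.length ≠ 0 := fun h => hne (SimpleGraph.Walk.eq_of_length_eq_zero h)
  have h1 : p.length ≠ 1 := fun h => hadj (SimpleGraph.Walk.adj_of_length_eq_one h)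
  omega

theorem SimpleGraph.Reachable.eq_of_forall_not_adj {V : Type*} {G : SimpleGraph V} {u v : V}
    (h : G.Reachable u v) (hu : ∀ w, ¬G.Adj u w) : u = v := by
  obtain ⟨p⟩ := h
  cases p with
  | nil => rfl
  | cons hadj _ => exact absurd hadj (hu _)

section Star

variable {n : ℕ}

theorem starGraph_adj (a b : Option (Fin (n - 1))) :
    (starGraph n).Adj a b ↔ a ≠ b ∧ (a = none ∨ b = none) := by
  simp only [starGraph, SimpleGraph.fromRel_adj]
  tauto

theorem starGraph_adj_none_some (i : Fin (n - 1)) : (starGraph n).Adj none (some i) :=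
  (starGraph_adj _ _).2 ⟨by simp, Or.inl rfl⟩

theorem starGraph_not_adj_some_some (i j : Fin (n - 1)) :
    ¬(starGraph n).Adj (some i) (some j) := by
  simp [starGraph_adj]

theorem mem_starEstar_iff (i : Fin (n - 1)) : s(none, some i) ∈ starEstar n ↔ (i : ℕ) ≠ 0 := by
  simp [starEstar, Sym2.eq, Sym2.rel_iff']

theorem sum_starWeight_spokes (hn : 2 ≤ n) (ε : ℝ) :
    ∑ i : Fin (n - 1), starWeight n ε none (some i) = 2 * ((n : ℝ) - 2) - ε / 2 := by
  have : NeZero (n - 1) := ⟨by omega⟩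
  have hspoke : ∀ i : Fin (n - 1), starWeight n ε none (some i) =
      (if i = 0 then (n : ℝ) - 3 - ε / 2 else 0) + 1 := by
    intro i
    simp only [starWeight, Fin.val_eq_zero_iff]
    split_ifs <;> ring
  have hcard : ((n - 1 : ℕ) : ℝ) = n - 1 := by push_cast [Nat.cast_sub (by omega : 1 ≤ n)]; ring
  simp only [hspoke, Finset.sum_add_distrib, Finset.sum_ite_eq', Finset.mem_univ, if_true,
    Finset.sum_const, Finset.card_univ, Fintype.card_fin, nsmul_eq_mul, hcard]
  ring

theorem starEdgesWeight_eq_sum_spokes (ε : ℝ) (F : Finset (Sym2 (Option (Fin (n - 1))))) :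
    starEdgesWeight n ε F =
      ∑ i ∈ univ.filter (fun i => s(none, some i) ∈ F), starWeight n ε none (some i) := by
  rw [starEdgesWeight, Fintype.sum_sum_option_eq_two_mul _ (by simp [starWeight])
    (by simp [starWeight]) (fun i => by rw [Sym2.eq_swap]; rfl), Finset.sum_filter]
  ring

theorem starEdgesWeight_starEstar (hn : 2 ≤ n) (ε : ℝ) :
    starEdgesWeight n ε (starEstar n) = n - 2 := by
  have : NeZero (n - 1) := ⟨by omega⟩
  have hcut : univ.filter (fun i => s(none, some i) ∉ starEstar n) = {0} := by
    ext i
    simp [mem_starEstar_iff, Fin.val_eq_zero_iff]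
  have htotal := Finset.sum_filter_add_sum_filter_not univ (fun i => s(none, some i) ∈ starEstar n)
    (fun i => starWeight n ε none (some i))
  have hheavy : starWeight n ε none (some 0) = n - 2 - ε / 2 := by simp [starWeight]
  rw [sum_starWeight_spokes hn, hcut, Finset.sum_singleton, hheavy] at htotal
  rw [starEdgesWeight_eq_sum_spokes]
  linarith

theorem starEstar_isStarMulticut : IsStarMulticut n (starEstar n) := by
  refine ⟨?_, fun i j hij hreach => ?_⟩
  · intro e he
    simp only [starEstar, Finset.coe_filter, Finset.mem_univ, true_and] at he
    obtain ⟨i, -, rfl⟩ := he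
    exact starGraph_adj_none_some i
  · have hisolated : ∀ k : Fin (n - 1), (k : ℕ) ≠ 0 →
        ∀ w, ¬((starGraph n).deleteEdges ↑(starEstar n)).Adj (some k) w := by
      intro k hk w hadj
      rw [SimpleGraph.deleteEdges_adj, starGraph_adj] at hadj
      obtain ⟨⟨-, hw⟩, hcut⟩ := hadj
      obtain rfl : w = none := hw.resolve_left (by simp)
      exact hcut (by rw [Sym2.eq_swap, Finset.mem_coe, mem_starEstar_iff]; exact hk)
    by_cases hi : (i : ℕ) = 0
    · have hj : (j : ℕ) ≠ 0 := fun hj => hij (Fin.ext (hi.trans hj.symm))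
      exact hij (Option.some_injective _ (hreach.symm.eq_of_forall_not_adj (hisolated j hj)).symm)
    · exact hij (Option.some_injective _ (hreach.eq_of_forall_not_adj (hisolated i hi)))

theorem IsStarMulticut.spoke_mem_or_spoke_mem {E' : Finset (Sym2 (Option (Fin (n - 1))))}
    (hE' : IsStarMulticut n E') {i j : Fin (n - 1)} (hij : i ≠ j) :
    s(none, some i) ∈ E' ∨ s(none, some j) ∈ E' := by
  by_contra! hkeep
  have hi : ((starGraph n).deleteEdges ↑E').Adj (some i) none :=
    SimpleGraph.deleteEdges_adj.2
      ⟨(starGraph_adj_none_some i).symm, by rw [Sym2.eq_swap]; exact hkeep.1⟩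
  have hj : ((starGraph n).deleteEdges ↑E').Adj none (some j) :=
    SimpleGraph.deleteEdges_adj.2 ⟨starGraph_adj_none_some j, hkeep.2⟩
  exact hE'.2 i j hij (hi.reachable.trans hj.reachable)

theorem IsStarMulticut.card_spokes_not_mem_le_one {E' : Finset (Sym2 (Option (Fin (n - 1))))}
    (hE' : IsStarMulticut n E') : #(univ.filter fun i => s(none, some i) ∉ E') ≤ 1 := by
  refine Finset.card_le_one.2 fun i hi j hj => ?_
  by_contra hij
  simp only [Finset.mem_filter, Finset.mem_univ, true_and] at hi hj
  exact (hE'.spoke_mem_or_spoke_mem hij).elim hi hj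

theorem starWeight_spoke_le (hn : 4 ≤ n) {ε : ℝ} (hε1 : ε < 1) (i : Fin (n - 1)) :
    starWeight n ε none (some i) ≤ n - 2 - ε / 2 := by
  have : (4 : ℝ) ≤ n := by exact_mod_cast hn
  simp only [starWeight]
  split_ifs <;> linarith

theorem starWeight_spoke_nonneg (hn : 4 ≤ n) {ε : ℝ} (hε1 : ε < 1) (i : Fin (n - 1)) :
    0 ≤ starWeight n ε none (some i) := by
  have : (4 : ℝ) ≤ n := by exact_mod_cast hn
  simp only [starWeight]
  split_ifs <;> linarith

theorem IsStarMulticut.le_starEdgesWeight (hn : 4 ≤ n) {ε : ℝ} (hε1 : ε < 1)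
    {E' : Finset (Sym2 (Option (Fin (n - 1))))} (hE' : IsStarMulticut n E') :
    (n : ℝ) - 2 ≤ starEdgesWeight n ε E' := by
  have : Nonempty (Fin (n - 1)) := ⟨⟨0, by omega⟩⟩
  obtain ⟨m, hm⟩ := Finset.card_le_one_iff_subset_singleton.1 hE'.card_spokes_not_mem_le_one
  have hkept : ∑ i ∈ univ.filter (fun i => s(none, some i) ∉ E'), starWeight n ε none (some i)
      ≤ n - 2 - ε / 2 :=
    calc _ ≤ ∑ i ∈ {m}, starWeight n ε none (some i) :=
          Finset.sum_le_sum_of_subset_of_nonneg hm fun i _ _ => starWeight_spoke_nonneg hn hε1 i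
      _ ≤ n - 2 - ε / 2 := by rw [Finset.sum_singleton]; exact starWeight_spoke_le hn hε1 m
  have htotal := Finset.sum_filter_add_sum_filter_not univ (fun i => s(none, some i) ∈ E')
    (fun i => starWeight n ε none (some i))
  rw [sum_starWeight_spokes (by omega)] at htotal
  rw [starEdgesWeight_eq_sum_spokes]
  linarith

end Star

/-- For `n ≥ 4` and `0 < ε < 1`, in the star Minimum Multicut instance
`I(n, ε)` the minimum weight of a multicut equals `n − 2`, while the edge-length
assignment `ℓ ≡ 1/2` is a feasible solution of the metric LP relaxation (nonnegative
lengths, and every path between two distinct terminals has total length at least `1`)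
whose objective value equals `n − 2 − ε/4 < n − 2`.  Hence the LP relaxation of Minimum
Multicut is not integral on this `(n − 2 − ε)`-stable instance. -/
theorem stmt16 (n : ℕ) (hn : 4 ≤ n) (ε : ℝ) (hε0 : 0 < ε) (hε1 : ε < 1) :
    IsStarMulticut n (starEstar n) ∧
    starEdgesWeight n ε (starEstar n) = (n : ℝ) - 2 ∧
    (∀ E' : Finset (Sym2 (Option (Fin (n - 1)))), IsStarMulticut n E' →
      (n : ℝ) - 2 ≤ starEdgesWeight n ε E') ∧
    (∀ e : Sym2 (Option (Fin (n - 1))), 0 ≤ (fun _ : Sym2 (Option (Fin (n - 1))) => (1 : ℝ) / 2) e) ∧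
    (∀ i j : Fin (n - 1), i ≠ j →
      ∀ p : (starGraph n).Walk (some i) (some j),
        1 ≤ (p.edges.map (fun _ : Sym2 (Option (Fin (n - 1))) => (1 : ℝ) / 2)).sum) ∧
    (∑ x, ∑ y, starWeight n ε x y *
        (fun _ : Sym2 (Option (Fin (n - 1))) => (1 : ℝ) / 2) s(x, y)) / 2 =
      (n : ℝ) - 2 - ε / 4 ∧
    (n : ℝ) - 2 - ε / 4 < (n : ℝ) - 2 := by
  refine ⟨starEstar_isStarMulticut, starEdgesWeight_starEstar (by omega) ε,
    fun E' hE' => hE'.le_starEdgesWeight hn hε1, fun _ => by norm_num, fun i j hij p => ?_, ?_,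
    by linarith⟩
  · have hlen : (2 : ℝ) ≤ p.length := by
      exact_mod_cast p.two_le_length_of_not_adj (by simpa using hij)
        (starGraph_not_adj_some_some i j)
    rw [List.map_const', List.sum_replicate, SimpleGraph.Walk.length_edges, nsmul_eq_mul]
    linarith
  · rw [Fintype.sum_sum_option_eq_two_mul _ (by simp [starWeight]) (by simp [starWeight])
      (fun _ => rfl), ← Finset.sum_mul, sum_starWeight_spokes (by omega)]
    ring
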